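/- For a positively homogeneous map σ: ℝ^n → ℝ^n (σ(λv) = λσ(v) for all λ > 0) and nonzero v ∈ ℝ^n with σ(v) ≠ 0, the Möbius pointwise application σ^{⊗α}(y) = exp_0^α(σ(log_0^α(y))) on the Poincaré ball D^{n,α} simplifies to (1/√α) tanh((‖σ(y)‖/‖y‖)·tanh⁻¹(√α‖y‖)) · σ(y)/‖σ(y)‖ for y ≠ 0. -/

import Mathlib

/-! Since `logD α y` is the positive multiple `artanh (√α ‖y‖) / (√α ‖y‖)` of `y`, homogeneity
moves this scalar outside `σ`; `expD` of a positive multiple `c • w` is again a multiple of `w`,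
with `c` entering only through the argument `c √α ‖w‖` of `tanh`. -/

noncomputable section
open Finset

/-- Lorentzian scalar product on ℝ^{n+1}. -/
def lprod {n : ℕ} (x y : Fin (n + 1) → ℝ) : ℝ :=
  -(x 0 * y 0) + ∑ i : Fin n, x i.succ * y i.succ

/-- The hyperboloid H^{n,β}. -/
def onH {n : ℕ} (β : ℝ) (x : Fin (n + 1) → ℝ) : Prop :=
  lprod x x = -β ∧ 0 < x 0

/-- The origin (√β, 0, …, 0) of the hyperboloid. -/
def orig (n : ℕ) (β : ℝ) : Fin (n + 1) → ℝ :=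
  Fin.cons (Real.sqrt β) (fun _ => 0)

/-- Lorentzian norm. -/
def lnorm {n : ℕ} (v : Fin (n + 1) → ℝ) : ℝ := Real.sqrt (lprod v v)

/-- Euclidean norm of a vector in ℝ^n. -/
def enormR {n : ℕ} (v : Fin n → ℝ) : ℝ := Real.sqrt (∑ i : Fin n, (v i) ^ 2)

/-- Exponential map at the origin of the hyperboloid. -/
def expO {n : ℕ} (β : ℝ) (v : Fin (n + 1) → ℝ) : Fin (n + 1) → ℝ :=
  fun i => Real.cosh (lnorm v / Real.sqrt β) * orig n β i
    + Real.sqrt β * Real.sinh (lnorm v / Real.sqrt β) * (v i / lnorm v)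

/-- Inverse hyperbolic cosine. -/
def arcosh (x : ℝ) : ℝ := Real.log (x + Real.sqrt (x ^ 2 - 1))

/-- Intrinsic distance on the hyperboloid. -/
def dH {n : ℕ} (β : ℝ) (x y : Fin (n + 1) → ℝ) : ℝ :=
  Real.sqrt β * arcosh (-(lprod x y) / β)

/-- Logarithmic map at the origin of the hyperboloid. -/
def logO {n : ℕ} (β : ℝ) (x : Fin (n + 1) → ℝ) : Fin (n + 1) → ℝ :=
  fun i => dH β (orig n β) x *
    ((x i + (1 / β) * lprod (orig n β) x * orig n β i) /
      lnorm (fun j => x j + (1 / β) * lprod (orig n β) x * orig n β j))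

/-- Squared Lorentzian distance. -/
def dL2 {n : ℕ} (β : ℝ) (x y : Fin (n + 1) → ℝ) : ℝ := -2 * β - 2 * lprod x y

/-- Inverse hyperbolic tangent. -/
def artanh (x : ℝ) : ℝ := Real.log ((1 + x) / (1 - x)) / 2

/-- Exponential map at the origin of the Poincaré ball. -/
def expD {n : ℕ} (α : ℝ) (v : Fin n → ℝ) : Fin n → ℝ :=
  fun i => Real.tanh (Real.sqrt α * enormR v) * (v i / (Real.sqrt α * enormR v))

/-- Logarithmic map at the origin of the Poincaré ball. -/
def logD {n : ℕ} (α : ℝ) (y : Fin n → ℝ) : Fin n → ℝ :=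
  fun i => artanh (Real.sqrt α * enormR y) * (y i / (Real.sqrt α * enormR y))

theorem enormR_eq_norm {n : ℕ} (v : Fin n → ℝ) :
    enormR v = ‖WithLp.toLp 2 v‖ := by
  simp [enormR, EuclideanSpace.norm_eq]

theorem enormR_smul {n : ℕ} (c : ℝ) (v : Fin n → ℝ) : enormR (c • v) = |c| * enormR v := by
  simp only [enormR_eq_norm, WithLp.toLp_smul, norm_smul, Real.norm_eq_abs]

theorem enormR_pos {n : ℕ} {v : Fin n → ℝ} (hv : v ≠ 0) : 0 < enormR v := by
  rw [enormR_eq_norm, norm_pos_iff, Ne, WithLp.toLp_eq_zero]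
  exact hv

theorem sqrt_mul_enormR_lt_one {n : ℕ} {α : ℝ} (hα : 0 ≤ α) {y : Fin n → ℝ}
    (hy : α * ∑ i : Fin n, (y i) ^ 2 < 1) : Real.sqrt α * enormR y < 1 := by
  rw [enormR, ← Real.sqrt_mul hα, Real.sqrt_lt' one_pos, one_pow]
  exact hy

theorem artanh_pos {x : ℝ} (h0 : 0 < x) (h1 : x < 1) : 0 < artanh x := by
  have : 1 < (1 + x) / (1 - x) := by
    rw [one_lt_div (by linarith)]
    linarith
  exact half_pos (Real.log_pos this)

theorem logD_eq_smul {n : ℕ} (α : ℝ) (y : Fin n → ℝ) :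
    logD α y = (artanh (Real.sqrt α * enormR y) / (Real.sqrt α * enormR y)) • y := by
  ext i
  simp only [logD, Pi.smul_apply, smul_eq_mul]
  ring

theorem expD_eq_smul {n : ℕ} (α : ℝ) (v : Fin n → ℝ) :
    expD α v = (Real.tanh (Real.sqrt α * enormR v) / (Real.sqrt α * enormR v)) • v := by
  ext i
  simp only [expD, Pi.smul_apply, smul_eq_mul]
  ring

theorem expD_smul {n : ℕ} (α : ℝ) {c : ℝ} (hc : 0 < c) (v : Fin n → ℝ) :
    expD α (c • v) =
      (Real.tanh (c * (Real.sqrt α * enormR v)) / (Real.sqrt α * enormR v)) • v := by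
  rw [expD_eq_smul, enormR_smul, abs_of_pos hc, smul_smul]
  congr 1
  rw [mul_left_comm, div_mul_eq_mul_div, mul_comm _ c, mul_div_mul_left _ _ hc.ne']

theorem mobius_homogeneous_simplification_general {n : ℕ} {α : ℝ} (hα : 0 < α)
    (σ : (Fin n → ℝ) → (Fin n → ℝ))
    (hσ : ∀ (c : ℝ) (v : Fin n → ℝ), 0 < c → σ (c • v) = c • σ v)
    {y : Fin n → ℝ} (hy : α * ∑ i : Fin n, (y i) ^ 2 < 1)
    (hy0 : y ≠ 0) :
    expD α (σ (logD α y)) = fun i => (1 / Real.sqrt α) *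
      Real.tanh ((enormR (σ y) / enormR y) * artanh (Real.sqrt α * enormR y)) *
      (σ y i / enormR (σ y)) := by
  have hs : 0 < Real.sqrt α := Real.sqrt_pos.2 hα
  have hsy : 0 < Real.sqrt α * enormR y := mul_pos hs (enormR_pos hy0)
  have hA : 0 < artanh (Real.sqrt α * enormR y) :=
    artanh_pos hsy (sqrt_mul_enormR_lt_one hα.le hy)
  rw [logD_eq_smul, hσ _ _ (div_pos hA hsy), expD_smul _ (div_pos hA hsy)]
  ext i
  rw [Pi.smul_apply, smul_eq_mul]
  field_simp

theorem mobius_homogeneous_simplification {n : ℕ} {α : ℝ} (hα : 0 < α)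
    (σ : (Fin n → ℝ) → (Fin n → ℝ))
    (hσ : ∀ (c : ℝ) (v : Fin n → ℝ), 0 < c → σ (c • v) = c • σ v)
    {y : Fin n → ℝ} (hy : α * ∑ i : Fin n, (y i) ^ 2 < 1)
    (hy0 : y ≠ 0) (hσy : σ y ≠ 0) :
    expD α (σ (logD α y)) = fun i => (1 / Real.sqrt α) *
      Real.tanh ((enormR (σ y) / enormR y) * artanh (Real.sqrt α * enormR y)) *
      (σ y i / enormR (σ y)) :=
  mobius_homogeneous_simplification_general hα σ hσ hy hy0
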